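/- Let Δ ⊆ ℝⁿ be bounded by l, u ∈ Δ and let N : Δ → {0,1} be monotone. Let x ∈ Δ with N(x) = 0 and S ⊆ {1,…,n}. Then S is a contrastive explanation for x (there exists y ∈ Δ with N(x^{S|y}) ≠ N(x)) if and only if N(x^{S|u}) = 1. -/

import Mathlib

/-- `substOn x S y` is `x^{S|y}`: the vector `x` with the coordinates in `S`
replaced by those of `y`. -/
def substOn {n : ℕ} (x : Fin n → ℝ) (S : Finset (Fin n)) (y : Fin n → ℝ) :
    Fin n → ℝ :=
  fun i => if i ∈ S then y i else x i

theorem substOn_le_substOn {n : ℕ} {x y y' : Fin n → ℝ} {S : Finset (Fin n)}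
    (h : ∀ i ∈ S, y i ≤ y' i) (i : Fin n) : substOn x S y i ≤ substOn x S y' i := by
  unfold substOn
  split_ifs with hi
  exacts [h i hi, le_rfl]

theorem contrastive_iff_upper_bound_general {n : ℕ}
    (Δ : Set (Fin n → ℝ)) (l u : Fin n → ℝ) (hu : u ∈ Δ)
    (hbound : ∀ x ∈ Δ, ∀ i, l i ≤ x i ∧ x i ≤ u i)
    (hclosed : ∀ x ∈ Δ, ∀ y ∈ Δ, ∀ S : Finset (Fin n), substOn x S y ∈ Δ)
    (N : (Fin n → ℝ) → ℕ)
    (hN01 : ∀ x ∈ Δ, N x = 0 ∨ N x = 1)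
    (hNmono : ∀ x ∈ Δ, ∀ x' ∈ Δ, (∀ i, x i ≤ x' i) → N x ≤ N x')
    (x : Fin n → ℝ) (hx : x ∈ Δ) (hNx : N x = 0) (S : Finset (Fin n)) :
    (∃ y ∈ Δ, N (substOn x S y) ≠ N x) ↔ N (substOn x S u) = 1 := by
  have hxu : substOn x S u ∈ Δ := hclosed x hx u hu S
  constructor
  · rintro ⟨y, hy, hne⟩
    have hxy : substOn x S y ∈ Δ := hclosed x hx y hy S
    have hy_one : N (substOn x S y) = 1 := (hN01 _ hxy).resolve_left (hNx ▸ hne)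
    have hle : N (substOn x S y) ≤ N (substOn x S u) :=
      hNmono _ hxy _ hxu (substOn_le_substOn fun i _ => (hbound y hy i).2)
    exact (hN01 _ hxu).resolve_left (by omega)
  · exact fun h => ⟨u, hu, by omega⟩

/-- for a monotone classifier on a bounded domain closed under
substitution, with `N x = 0`, a subset `S` is a contrastive explanation for `x`
iff substituting the upper bound on `S` yields `1`. -/
theorem contrastive_iff_upper_bound {n : ℕ}
    (Δ : Set (Fin n → ℝ)) (l u : Fin n → ℝ) (hl : l ∈ Δ) (hu : u ∈ Δ)
    (hbound : ∀ x ∈ Δ, ∀ i, l i ≤ x i ∧ x i ≤ u i)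
    (hclosed : ∀ x ∈ Δ, ∀ y ∈ Δ, ∀ S : Finset (Fin n), substOn x S y ∈ Δ)
    (N : (Fin n → ℝ) → ℕ)
    (hN01 : ∀ x ∈ Δ, N x = 0 ∨ N x = 1)
    (hNmono : ∀ x ∈ Δ, ∀ x' ∈ Δ, (∀ i, x i ≤ x' i) → N x ≤ N x')
    (x : Fin n → ℝ) (hx : x ∈ Δ) (hNx : N x = 0) (S : Finset (Fin n)) :
    (∃ y ∈ Δ, N (substOn x S y) ≠ N x) ↔ N (substOn x S u) = 1 :=
  contrastive_iff_upper_bound_general Δ l u hu hbound hclosed N hN01 hNmono x hx hNx S
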